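/- arXiv:1811.01055 — 4 statements merged into one kernel-verified Lean document; each statement's English description precedes it below -/
import Mathlib

section
/- Let A₁, …, Aₙ be the vertices of a convex polygon in cyclic order, in general position, and let 1 ≤ i < j < k ≤ n. Then exactly one of the following holds: (a) the direction of A_iA_k is forbidden at A_j, i.e., there is no l ≠ j with A_jA_l ∥ A_iA_k; or (b) there exists p with i < p < k and p ≠ j such that A_iA_k ∥ A_jA_p. Moreover, in case (b) the index p is unique, and for every l ∉ {i, k} the segment A_iA_l is not parallel to A_jA_p, and the only index l with A_lA_j ∥ A_jA_p is l = p. -/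
open Real

noncomputable section

/-- The Euclidean plane `ℝ²`. -/
abbrev Pt : Type := EuclideanSpace ℝ (Fin 2)

/-- The point of `ℝ²` with coordinates `(a, b)`. -/
def toPt (a b : ℝ) : Pt := (WithLp.equiv 2 (Fin 2 → ℝ)).symm ![a, b]

/-- Segments `PQ` and `RS` are parallel: the vectors `Q - P` and `S - R` are
linearly dependent over `ℝ`. -/
def Para (P Q R S : Pt) : Prop := ¬ LinearIndependent ℝ ![Q - P, S - R]

/-- No three of the points of `S` are collinear. -/
def GenPos (S : Set Pt) : Prop :=
  ∀ P ∈ S, ∀ Q ∈ S, ∀ R ∈ S, P ≠ Q → P ≠ R → Q ≠ R →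
    ¬ Collinear ℝ ({P, Q, R} : Set Pt)

/-- The set of directions (lines through the origin) determined by `S`. -/
def dirs (S : Set Pt) : Set (Submodule ℝ Pt) :=
  { d | ∃ P ∈ S, ∃ Q ∈ S, P ≠ Q ∧ d = Submodule.span ℝ ({P - Q} : Set Pt) }

/-- The direction `d` is forbidden at the point `P` of `S`. -/
def Forbidden (S : Set Pt) (P : Pt) (d : Submodule ℝ Pt) : Prop :=
  ¬ ∃ Q ∈ S, Q ≠ P ∧ Submodule.span ℝ ({Q - P} : Set Pt) = d

/-- The cross product (determinant) of two vectors of `ℝ²`. -/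
def cross (u v : Pt) : ℝ := u 0 * v 1 - u 1 * v 0

/-- `A 1, …, A n` (indices modulo `n`) are the vertices of a convex polygon in
cyclic order: they are pairwise distinct, each is an extreme point of the convex
hull of all of them, and they are indexed consecutively along the boundary
(all remaining points lie strictly on a common side of each edge, with a
consistent orientation). -/
def ConvexCyclic {n : ℕ} (A : ZMod n → Pt) : Prop :=
  Function.Injective A ∧
  (∀ i, A i ∈ Set.extremePoints ℝ (convexHull ℝ (Set.range A))) ∧
  ((∀ i j, j ≠ i → j ≠ i + 1 → 0 < cross (A (i + 1) - A i) (A j - A i)) ∨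
   (∀ i j, j ≠ i → j ≠ i + 1 → cross (A (i + 1) - A i) (A j - A i) < 0))

/-- The value of the quadratic polynomial `a x² + b xy + c y² + d x + e y + f`
at the point `P`. -/
def conicEval (a b c d e f : ℝ) (P : Pt) : ℝ :=
  a * P 0 ^ 2 + b * P 0 * P 1 + c * P 1 ^ 2 + d * P 0 + e * P 1 + f

/-- `S` lies on a common conic: some nonzero real quadratic polynomial vanishes
at every point of `S`. -/
def OnConic (S : Set Pt) : Prop :=
  ∃ a b c d e f : ℝ, (a, b, c, d, e, f) ≠ (0, 0, 0, 0, 0, 0) ∧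
    ∀ P ∈ S, conicEval a b c d e f P = 0

/-- The symmetric matrix associated to a quadratic polynomial; the conic is
nondegenerate when this matrix is invertible. -/
def conicMatrix (a b c d e f : ℝ) : Matrix (Fin 3) (Fin 3) ℝ :=
  !![a, b / 2, d / 2; b / 2, c, e / 2; d / 2, e / 2, f]

/-- The vertex set of the regular `m`-gon: the `m`-th roots of unity,
identified with points of `ℝ²`. -/
def regularPolygon (m : ℕ) : Set Pt :=
  { P | ∃ k < m, P = toPt (Real.cos (2 * π * k / m)) (Real.sin (2 * π * k / m)) }

/-- The Euclidean distance from `P` to the line through `Q` and `R`. -/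
def distToLine (P Q R : Pt) : ℝ :=
  Metric.infDist P (affineSpan ℝ ({Q, R} : Set Pt) : Set Pt)

namespace Aux
lemma ptSub (u v : Pt) (x : Fin 2) : (u - v) x = u x - v x := rfl
lemma ptAdd (u v : Pt) (x : Fin 2) : (u + v) x = u x + v x := rfl
lemma ptSmul (c : ℝ) (u : Pt) (x : Fin 2) : (c • u) x = c * u x := rfl
lemma ptZero (x : Fin 2) : (0 : Pt) x = 0 := rfl

lemma ptExt {u v : Pt} (h0 : u 0 = v 0) (h1 : u 1 = v 1) : u = v := by
  apply PiLp.ext; intro x; fin_cases x <;> assumption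

lemma notIndep_iff (u v : Pt) : ¬ LinearIndependent ℝ ![u, v] ↔ cross u v = 0 := by
  rw [linearIndependent_fin2]
  simp only [Matrix.cons_val_one, Matrix.head_cons, Matrix.cons_val_zero]
  push_neg
  constructor
  · intro hd
    by_cases hv : v = 0
    · simp [cross, hv, ptZero]
    · obtain ⟨a, ha⟩ := hd hv
      rw [← ha]; simp only [cross, ptSmul]; ring
  · intro h hv
    have hco : v 0 ≠ 0 ∨ v 1 ≠ 0 := by
      by_contra hc; push_neg at hc; exact hv (ptExt hc.1 hc.2)
    simp only [cross] at h
    rcases hco with h0 | h1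
    · refine ⟨u 0 / v 0, ptExt ?_ ?_⟩ <;> simp only [ptSmul] <;> field_simp <;> nlinarith [h]
    · refine ⟨u 1 / v 1, ptExt ?_ ?_⟩ <;> simp only [ptSmul] <;> field_simp <;> nlinarith [h]

lemma exists_smul_of_cross (u v : Pt) (hu : u ≠ 0) (h : cross u v = 0) : ∃ c : ℝ, v = c • u := by
  have h' : cross v u = 0 := by simp only [cross] at *; linarith
  have hd := (notIndep_iff v u).mpr h'
  rw [linearIndependent_fin2] at hd
  push_neg at hd
  simp only [Matrix.cons_val_one, Matrix.head_cons, Matrix.cons_val_zero] at hd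
  obtain ⟨a, ha⟩ := hd hu
  exact ⟨a, ha.symm⟩

lemma collinear_of_cross (P Q R : Pt) (h : cross (Q - P) (R - P) = 0) :
    Collinear ℝ ({P, Q, R} : Set Pt) := by
  by_cases hRP : R = P
  · subst hRP
    have hs : ({R, Q, R} : Set Pt) = {R, Q} := by ext x; simp; tauto
    rw [hs]
    exact collinear_pair ℝ R Q
  · obtain ⟨a, ha⟩ := exists_smul_of_cross (R - P) (Q - P)
      (sub_ne_zero.mpr hRP) (by simp only [cross] at *; linarith)
    rw [collinear_iff_of_mem (Set.mem_insert P {Q, R})]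
    refine ⟨R - P, ?_⟩
    intro x hx
    simp only [Set.mem_insert_iff, Set.mem_singleton_iff] at hx
    rcases hx with rfl | rfl | rfl
    · exact ⟨0, by simp⟩
    · exact ⟨a, by rw [← ha]; simp⟩
    · exact ⟨1, by simp⟩

lemma castInj (n a b : ℕ) (hn : 3 ≤ n) (ha1 : 1 ≤ a) (han : a ≤ n) (hb1 : 1 ≤ b)
    (hbn : b ≤ n) (h : (a : ZMod n) = b) : a = b := by
  haveI : NeZero n := ⟨by omega⟩
  have hv := congrArg ZMod.val h
  rw [ZMod.val_natCast, ZMod.val_natCast] at hv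
  rcases Nat.lt_or_ge a n with h1 | h1 <;> rcases Nat.lt_or_ge b n with h2 | h2
  · rwa [Nat.mod_eq_of_lt h1, Nat.mod_eq_of_lt h2] at hv
  · have hb : b = n := by omega
    rw [Nat.mod_eq_of_lt h1, hb, Nat.mod_self] at hv; omega
  · have ha : a = n := by omega
    rw [Nat.mod_eq_of_lt h2, ha, Nat.mod_self] at hv; omega
  · omega

lemma ccw3 (n : ℕ) (A : ZMod n → Pt) (α : ℝ)
    (hE : ∀ a b : ZMod n, b ≠ a → b ≠ a + 1 → 0 < α * cross (A (a + 1) - A a) (A b - A a)) :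
    ∀ i m l : ℕ, 1 ≤ i → i < m → m < l → l ≤ n →
      0 < α * cross (A m - A i) (A l - A i) := by
  intro i m l hi him hml hln
  have hn3 : 3 ≤ n := by omega
  have edge : ∀ a b : ℕ, 1 ≤ a → a + 1 ≤ n → 1 ≤ b → b ≤ n → b ≠ a → b ≠ a + 1 →
      0 < α * cross (A ((a + 1 : ℕ) : ZMod n) - A a) (A b - A a) := by
    intro a b ha han hb hbn hba hba1
    have hcast : ((a + 1 : ℕ) : ZMod n) = (a : ZMod n) + 1 := by push_cast; ring
    rw [hcast]
    apply hE
    · exact fun h => hba (castInj n b a hn3 hb hbn ha (by omega) h)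
    · rw [← hcast]
      exact fun h => hba1 (castInj n b (a + 1) hn3 hb hbn (by omega) han h)
  have cyc : ∀ a b c : Pt, cross (b - a) (c - a) = cross (c - b) (a - b) := by
    intro a b c; simp only [cross, ptSub]; ring
  rcases Nat.lt_or_ge (i + 1) m with him2 | him2
  swap
  · have hm : m = i + 1 := by omega
    subst hm
    exact edge i l hi (by omega) (by omega) hln (by omega) (by omega)
  · have key : ∀ l' : ℕ, m + 1 ≤ l' → l' ≤ n → 0 < α * cross (A m - A i) (A l' - A i) := by
      intro l' hl'
      induction l', hl' using Nat.le_induction with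
      | base =>
        intro hln'
        rw [cyc (A i) (A m) (A ((m + 1 : ℕ) : ZMod n))]
        exact edge m i (by omega) hln' hi (by omega) (by omega) (by omega)
      | succ l' hl' IH =>
        intro hln'
        have h1 := edge i m hi (by omega) (by omega) (by omega) (by omega) (by omega)
        have h2 := edge i l' hi (by omega) (by omega) (by omega) (by omega) (by omega)
        have h3 := edge i (l' + 1) hi (by omega) (by omega) hln' (by omega) (by omega)
        have h4 := IH (by omega)
        have h5 : 0 < α * cross (A l' - A i) (A ((l' + 1 : ℕ) : ZMod n) - A i) := by
          rw [cyc (A i) (A l') (A ((l' + 1 : ℕ) : ZMod n))]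
          exact edge l' i (by omega) hln' hi (by omega) (by omega) (by omega)
        have key5 : (α * cross (A m - A i) (A ((l' + 1 : ℕ) : ZMod n) - A i)) *
              (α * cross (A ((i + 1 : ℕ) : ZMod n) - A i) (A l' - A i)) =
            (α * cross (A l' - A i) (A ((l' + 1 : ℕ) : ZMod n) - A i)) *
              (α * cross (A ((i + 1 : ℕ) : ZMod n) - A i) (A m - A i)) +
            (α * cross (A m - A i) (A l' - A i)) *
              (α * cross (A ((i + 1 : ℕ) : ZMod n) - A i) (A ((l' + 1 : ℕ) : ZMod n) - A i)) := by
          simp only [cross, ptSub]; ring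
        nlinarith [mul_pos h5 h1, mul_pos h4 h3, h2, key5]
    exact key l (by omega) hln

end Aux

open Aux

theorem statement_1 (n : ℕ) (A : ZMod n → Pt)
    (hconv : ConvexCyclic A) (hgp : GenPos (Set.range A))
    (i j k : ℕ) (h1i : 1 ≤ i) (hij : i < j) (hjk : j < k) (hkn : k ≤ n) :
    (Xor'
      (Forbidden (Set.range A) (A j) (Submodule.span ℝ ({A k - A i} : Set Pt)))
      (∃ p : ℕ, i < p ∧ p < k ∧ p ≠ j ∧ Para (A i) (A k) (A j) (A p))) ∧
    (∀ p : ℕ, i < p → p < k → p ≠ j → Para (A i) (A k) (A j) (A p) →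
      ((∀ q : ℕ, i < q → q < k → q ≠ j → Para (A i) (A k) (A j) (A q) → q = p) ∧
       (∀ l : ℕ, 1 ≤ l → l ≤ n → l ≠ i → l ≠ k → ¬ Para (A i) (A l) (A j) (A p)) ∧
       (∀ l : ℕ, 1 ≤ l → l ≤ n → l ≠ j →
         (Para (A l) (A j) (A j) (A p) ↔ l = p)))) := by
  obtain ⟨hAi, -, hor⟩ := hconv
  have hn3 : 3 ≤ n := by omega
  haveI : NeZero n := ⟨by omega⟩
  have hAinj : ∀ a b : ℕ, 1 ≤ a → a ≤ n → 1 ≤ b → b ≤ n → A a = A b → a = b :=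
    fun a b ha han hb hbn h => castInj n a b hn3 ha han hb hbn (hAi h)
  have hAne : ∀ a b : ℕ, 1 ≤ a → a ≤ n → 1 ≤ b → b ≤ n → a ≠ b → A (a : ℕ) ≠ A (b : ℕ) :=
    fun a b ha han hb hbn hab h => hab (hAinj a b ha han hb hbn h)
  have hgp' : ∀ a b c : ℕ, 1 ≤ a → a ≤ n → 1 ≤ b → b ≤ n → 1 ≤ c → c ≤ n →
      a ≠ b → a ≠ c → b ≠ c → cross (A b - A a) (A c - A a) ≠ 0 := by
    intro a b c ha han hb hbn hc hcn hab hac hbc hcr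
    exact hgp (A a) ⟨a, rfl⟩ (A b) ⟨b, rfl⟩ (A c) ⟨c, rfl⟩
      (hAne a b ha han hb hbn hab) (hAne a c ha han hc hcn hac)
      (hAne b c hb hbn hc hcn hbc)
      (collinear_of_cross _ _ _ hcr)
  obtain ⟨α, hE⟩ : ∃ α : ℝ, ∀ a b : ZMod n, b ≠ a → b ≠ a + 1 →
      0 < α * cross (A (a + 1) - A a) (A b - A a) := by
    rcases hor with h | h
    · exact ⟨1, fun a b h1 h2 => by simpa using h a b h1 h2⟩
    · exact ⟨-1, fun a b h1 h2 => by have := h a b h1 h2; linarith⟩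
  have tri := ccw3 n A α hE
  have hu0 : A (k : ℕ) - A (i : ℕ) ≠ 0 :=
    sub_ne_zero.mpr (hAne k i (by omega) hkn (by omega) (by omega) (by omega))
  have hj_side : 0 < α * cross (A (j : ℕ) - A (i : ℕ)) (A (k : ℕ) - A (i : ℕ)) :=
    tri i j k h1i hij hjk hkn
  have hjik : cross (A (j : ℕ) - A (i : ℕ)) (A (k : ℕ) - A (i : ℕ)) ≠ 0 := by
    intro hx; rw [hx] at hj_side; simp at hj_side
  have hb_of_na : ¬ Forbidden (Set.range A) (A j)
        (Submodule.span ℝ ({A k - A i} : Set Pt)) →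
      ∃ p : ℕ, i < p ∧ p < k ∧ p ≠ j ∧ Para (A i) (A k) (A j) (A p) := by
    intro hna
    rw [Forbidden, not_not] at hna
    obtain ⟨Q, ⟨l0, rfl⟩, hQj, hsp⟩ := hna
    obtain ⟨p, hp1, hpn, hpcast⟩ : ∃ p : ℕ, 1 ≤ p ∧ p ≤ n ∧ ((p : ℕ) : ZMod n) = l0 := by
      refine ⟨if l0.val = 0 then n else l0.val, ?_, ?_, ?_⟩
      · split <;> omega
      · have := ZMod.val_lt l0
        split <;> omega
      · by_cases h0 : l0.val = 0
        · have hl0 : l0 = 0 := by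
            have := ZMod.natCast_rightInverse (n := n) l0
            rw [h0] at this; simpa using this.symm
          rw [if_pos h0, hl0, ZMod.natCast_self]
        · rw [if_neg h0]
          exact ZMod.natCast_rightInverse (n := n) l0
    have hApl : A ((p : ℕ) : ZMod n) = A l0 := by rw [hpcast]
    have hmem : A l0 - A (j : ℕ) ∈ Submodule.span ℝ ({A (k : ℕ) - A (i : ℕ)} : Set Pt) := by
      rw [← hsp]; exact Submodule.mem_span_singleton_self _
    obtain ⟨c, hc⟩ := Submodule.mem_span_singleton.mp hmem
    have hc2 : A ((p : ℕ) : ZMod n) - A (j : ℕ) = c • (A (k : ℕ) - A (i : ℕ)) := by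
      rw [hApl, ← hc]
    have hxj : ∀ t : Fin 2, A ((j : ℕ) : ZMod n) t =
        A ((p : ℕ) : ZMod n) t - c * (A ((k : ℕ) : ZMod n) t - A ((i : ℕ) : ZMod n) t) := by
      intro t
      have := congrArg (fun w : Pt => w t) hc2
      simp only [ptSub, ptSmul] at this
      linarith
    have hpj : p ≠ j := by
      intro h
      exact hQj (by rw [← hApl, h])
    have hpi : p ≠ i := by
      intro h
      apply hjik
      have hpe : A ((p : ℕ) : ZMod n) = A ((i : ℕ) : ZMod n) := by rw [h]
      simp only [cross, ptSub]
      rw [hxj 0, hxj 1, hpe]; ring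
    have hpk : p ≠ k := by
      intro h
      apply hjik
      have hpe : A ((p : ℕ) : ZMod n) = A ((k : ℕ) : ZMod n) := by rw [h]
      simp only [cross, ptSub]
      rw [hxj 0, hxj 1, hpe]; ring
    have hplow : i < p := by
      by_contra hple
      have hplt : p < i := by omega
      have h1 := tri p i k hp1 hplt (by omega) hkn
      have e : cross (A (i : ℕ) - A ((p : ℕ) : ZMod n)) (A (k : ℕ) - A ((p : ℕ) : ZMod n)) =
          - cross (A (j : ℕ) - A (i : ℕ)) (A (k : ℕ) - A (i : ℕ)) := by
        simp only [cross, ptSub]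
        rw [hxj 0, hxj 1]; ring
      rw [e] at h1
      nlinarith [hj_side, h1]
    have hphigh : p < k := by
      by_contra hpge
      have hpgt : k < p := by omega
      have h1 := tri i k p h1i (by omega) hpgt hpn
      have e : cross (A (k : ℕ) - A (i : ℕ)) (A ((p : ℕ) : ZMod n) - A (i : ℕ)) =
          - cross (A (j : ℕ) - A (i : ℕ)) (A (k : ℕ) - A (i : ℕ)) := by
        simp only [cross, ptSub]
        rw [hxj 0, hxj 1]; ring
      rw [e] at h1
      nlinarith [hj_side, h1]
    refine ⟨p, hplow, hphigh, hpj, ?_⟩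
    apply (notIndep_iff _ _).mpr
    simp only [cross, ptSub]
    rw [hxj 0, hxj 1]; ring
  have hna_of_b : (∃ p : ℕ, i < p ∧ p < k ∧ p ≠ j ∧ Para (A i) (A k) (A j) (A p)) →
      ¬ Forbidden (Set.range A) (A j) (Submodule.span ℝ ({A k - A i} : Set Pt)) := by
    rintro ⟨p, hip, hpk, hpj, hpar⟩ hforb
    apply hforb
    have hApj : A ((p : ℕ) : ZMod n) ≠ A ((j : ℕ) : ZMod n) :=
      hAne p j (by omega) (by omega) (by omega) (by omega) hpj
    refine ⟨A ((p : ℕ) : ZMod n), ⟨((p : ℕ) : ZMod n), rfl⟩, hApj, ?_⟩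
    have hcr : cross (A (k : ℕ) - A (i : ℕ)) (A ((p : ℕ) : ZMod n) - A (j : ℕ)) = 0 :=
      (notIndep_iff _ _).mp hpar
    obtain ⟨c, hc⟩ := exists_smul_of_cross _ _ hu0 hcr
    have hc0 : c ≠ 0 := by
      rintro rfl
      rw [zero_smul, sub_eq_zero] at hc
      exact hApj hc
    rw [hc]
    exact Submodule.span_singleton_smul_eq (isUnit_iff_ne_zero.mpr hc0) _
  constructor
  · by_cases hbb : ∃ p : ℕ, i < p ∧ p < k ∧ p ≠ j ∧ Para (A i) (A k) (A j) (A p)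
    · exact Or.inr ⟨hbb, hna_of_b hbb⟩
    · exact Or.inl ⟨by by_contra hna; exact hbb (hb_of_na hna), hbb⟩
  · intro p hip hpk hpj hpar
    have hcr : cross (A (k : ℕ) - A (i : ℕ)) (A ((p : ℕ) : ZMod n) - A (j : ℕ)) = 0 :=
      (notIndep_iff _ _).mp hpar
    obtain ⟨c, hc⟩ := exists_smul_of_cross _ _ hu0 hcr
    have hvpj : A ((p : ℕ) : ZMod n) - A ((j : ℕ) : ZMod n) ≠ 0 :=
      sub_ne_zero.mpr (hAne p j (by omega) (by omega) (by omega) (by omega) hpj)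
    refine ⟨?_, ?_, ?_⟩
    · intro q hiq hqk hqj hq
      by_contra hqp
      obtain ⟨c', hc'⟩ := exists_smul_of_cross _ _ hu0 ((notIndep_iff _ _).mp hq)
      refine hgp' j p q (by omega) (by omega) (by omega) (by omega) (by omega) (by omega)
        (Ne.symm hpj) (Ne.symm hqj) (fun h => hqp h.symm) ?_
      rw [hc, hc']; simp only [cross, ptSmul, ptSub]; ring
    · intro l hl1 hln hli hlk hl
      have hcr2 : cross (A (l : ℕ) - A (i : ℕ)) (A ((p : ℕ) : ZMod n) - A (j : ℕ)) = 0 :=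
        (notIndep_iff _ _).mp hl
      obtain ⟨e, he⟩ := exists_smul_of_cross _ _ hvpj
        (by simp only [cross] at hcr2 ⊢; linarith :
          cross (A ((p : ℕ) : ZMod n) - A ((j : ℕ) : ZMod n)) (A (l : ℕ) - A (i : ℕ)) = 0)
      refine hgp' i k l h1i (by omega) (by omega) hkn hl1 hln (by omega)
        (Ne.symm hli) (Ne.symm hlk) ?_
      rw [he, hc]; simp only [cross, ptSmul, ptSub]; ring
    · intro l hl1 hln hlj
      constructor
      · intro hl
        have hcr3 : cross (A (l : ℕ) - A (j : ℕ))
            (A ((p : ℕ) : ZMod n) - A (j : ℕ)) = 0 := by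
          have h0 : cross (A (j : ℕ) - A (l : ℕ)) (A ((p : ℕ) : ZMod n) - A (j : ℕ)) = 0 :=
            (notIndep_iff _ _).mp hl
          simp only [cross, ptSub] at h0 ⊢; linarith
        by_contra hlp
        obtain ⟨e, he⟩ := exists_smul_of_cross _ _ hvpj
          (by simp only [cross] at hcr3 ⊢; linarith :
            cross (A ((p : ℕ) : ZMod n) - A ((j : ℕ) : ZMod n)) (A (l : ℕ) - A (j : ℕ)) = 0)
        refine hgp' j l p (by omega) (by omega) hl1 hln (by omega) (by omega)
          (Ne.symm hlj) (Ne.symm hpj) hlp ?_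
        rw [he, hc]; simp only [cross, ptSmul, ptSub]; ring
      · rintro rfl
        apply (notIndep_iff _ _).mpr
        simp only [cross, ptSub]; ring
end
end

section
/- Let P₁, P₂, P₃, P₄, P₅, P₆ be pairwise distinct points in ℝ² such that P₁P₆ ∥ P₂P₅, P₂P₃ ∥ P₁P₄ and P₄P₅ ∥ P₃P₆. Then the six points P₁, …, P₆ lie on a common conic. -/
open Real
set_option maxRecDepth 100000

noncomputable section

set_option maxRecDepth 10000 in
set_option maxHeartbeats 4000000 in
private theorem det_fin_five (m00 m01 m02 m03 m04 m10 m11 m12 m13 m14 m20 m21 m22 m23 m24 m30 m31 m32 m33 m34 m40 m41 m42 m43 m44 : ℝ) :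
    (!![m00,m01,m02,m03,m04;
        m10,m11,m12,m13,m14;
        m20,m21,m22,m23,m24;
        m30,m31,m32,m33,m34;
        m40,m41,m42,m43,m44] : Matrix (Fin 5) (Fin 5) ℝ).det =
    m00*m11*m22*m33*m44 - m00*m11*m22*m34*m43 - m00*m11*m23*m32*m44 + m00*m11*m23*m34*m42 + m00*m11*m24*m32*m43 - m00*m11*m24*m33*m42 - m00*m12*m21*m33*m44 + m00*m12*m21*m34*m43 + m00*m12*m23*m31*m44 - m00*m12*m23*m34*m41 - m00*m12*m24*m31*m43 + m00*m12*m24*m33*m41 + m00*m13*m21*m32*m44 - m00*m13*m21*m34*m42 - m00*m13*m22*m31*m44 + m00*m13*m22*m34*m41 + m00*m13*m24*m31*m42 - m00*m13*m24*m32*m41 - m00*m14*m21*m32*m43 + m00*m14*m21*m33*m42 + m00*m14*m22*m31*m43 - m00*m14*m22*m33*m41 - m00*m14*m23*m31*m42 + m00*m14*m23*m32*m41 - m01*m10*m22*m33*m44 + m01*m10*m22*m34*m43 + m01*m10*m23*m32*m44 - m01*m10*m23*m34*m42 - m01*m10*m24*m32*m43 + m01*m10*m24*m33*m42 + m01*m12*m20*m33*m44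 - m01*m12*m20*m34*m43 - m01*m12*m23*m30*m44 + m01*m12*m23*m34*m40 + m01*m12*m24*m30*m43 - m01*m12*m24*m33*m40 - m01*m13*m20*m32*m44 + m01*m13*m20*m34*m42 + m01*m13*m22*m30*m44 - m01*m13*m22*m34*m40 - m01*m13*m24*m30*m42 + m01*m13*m24*m32*m40 + m01*m14*m20*m32*m43 - m01*m14*m20*m33*m42 - m01*m14*m22*m30*m43 + m01*m14*m22*m33*m40 + m01*m14*m23*m30*m42 - m01*m14*m23*m32*m40 + m02*m10*m21*m33*m44 - m02*m10*m21*m34*m43 - m02*m10*m23*m31*m44 + m02*m10*m23*m34*m41 + m02*m10*m24*m31*m43 - m02*m10*m24*m33*m41 - m02*m11*m20*m33*m44 + m02*m11*m20*m34*m43 + m02*m11*m23*m30*m44 - m02*m11*m23*m34*m40 - m02*m11*m24*m30*m43 + m02*m11*m24*m33*m40 + m02*m13*m20*m31*m44 - m02*m13*m20*m34*m41 - m02*m13*m21*m30*m44 + m02*m13*m21*m34*m40 + m02*m13*m24*m30*m41 - m02*m13*m24*m31*m40 - m02*m14*m20*m31*m43 + m02*m14*m20*m33*m41 + m02*m14*m21*m30*m43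 - m02*m14*m21*m33*m40 - m02*m14*m23*m30*m41 + m02*m14*m23*m31*m40 - m03*m10*m21*m32*m44 + m03*m10*m21*m34*m42 + m03*m10*m22*m31*m44 - m03*m10*m22*m34*m41 - m03*m10*m24*m31*m42 + m03*m10*m24*m32*m41 + m03*m11*m20*m32*m44 - m03*m11*m20*m34*m42 - m03*m11*m22*m30*m44 + m03*m11*m22*m34*m40 + m03*m11*m24*m30*m42 - m03*m11*m24*m32*m40 - m03*m12*m20*m31*m44 + m03*m12*m20*m34*m41 + m03*m12*m21*m30*m44 - m03*m12*m21*m34*m40 - m03*m12*m24*m30*m41 + m03*m12*m24*m31*m40 + m03*m14*m20*m31*m42 - m03*m14*m20*m32*m41 - m03*m14*m21*m30*m42 + m03*m14*m21*m32*m40 + m03*m14*m22*m30*m41 - m03*m14*m22*m31*m40 + m04*m10*m21*m32*m43 - m04*m10*m21*m33*m42 - m04*m10*m22*m31*m43 + m04*m10*m22*m33*m41 + m04*m10*m23*m31*m42 - m04*m10*m23*m32*m41 - m04*m11*m20*m32*m43 + m04*m11*m20*m33*m42 + m04*m11*m22*m30*m43 - m04*m11*m22*m33*m40 - m04*m11*m23*m30*m42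 + m04*m11*m23*m32*m40 + m04*m12*m20*m31*m43 - m04*m12*m20*m33*m41 - m04*m12*m21*m30*m43 + m04*m12*m21*m33*m40 + m04*m12*m23*m30*m41 - m04*m12*m23*m31*m40 - m04*m13*m20*m31*m42 + m04*m13*m20*m32*m41 + m04*m13*m21*m30*m42 - m04*m13*m21*m32*m40 - m04*m13*m22*m30*m41 + m04*m13*m22*m31*m40 := by
  simp only [Matrix.det_succ_row_zero, Matrix.submatrix_apply, Matrix.submatrix_submatrix,
    Matrix.det_unique, Fin.default_eq_zero, Function.comp_apply, Fin.sum_univ_succ,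
    Finset.sum_empty, Finset.univ_unique, Finset.sum_singleton, Fin.val_zero, Fin.val_succ,
    Fin.zero_succAbove, Fin.succ_succAbove_zero, Fin.succ_succAbove_one,
    Fin.succ_succAbove_succ,
    Matrix.cons_val', Matrix.cons_val_zero, Matrix.cons_val_one, Matrix.head_cons,
    Matrix.cons_val_succ, Matrix.of_apply, Matrix.head_fin_const, Matrix.empty_val', Matrix.cons_val_fin_one]
  ring

set_option maxHeartbeats 2000000 in
private lemma key5 (x2 y2 x3 y3 x4 y4 x5 y5 x6 y6 a g : ℝ)
    (h4x : x4 = g*(x3 - x2)) (h4y : y4 = g*(y3 - y2))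
    (h5x : x5 = x2 + a*x6) (h5y : y5 = y2 + a*y6)
    (hc : (x5 - x4) * (y6 - y3) - (y5 - y4) * (x6 - x3) = 0) :
    (!![x2^2, x2*y2, y2^2, x2, y2;
        x3^2, x3*y3, y3^2, x3, y3;
        x4^2, x4*y4, y4^2, x4, y4;
        x5^2, x5*y5, y5^2, x5, y5;
        x6^2, x6*y6, y6^2, x6, y6] : Matrix (Fin 5) (Fin 5) ℝ).det = 0 := by
  subst h4x h4y h5x h5y
  rw [det_fin_five]
  linear_combination ((1:ℝ) * y2^2 * x3 * y3 * x6^2 * a * g + (-1:ℝ) * y2^2 * x3^2 * x6 * y6 * a * g + (-1:ℝ) * y2^3 * x3 * x6^2 * a * g + (-1:ℝ) * x2 * y2 * y3^2 * x6^2 * a * g + (1:ℝ) * x2 * y2 * x3^2 * y6^2 * a * g + (1:ℝ) * x2 * y2^2 * y3 * x6^2 * a * g + (2:ℝ) * x2 * y2^2 * x3 * x6 * y6 * a * g + (1:ℝ) * x2^2 * y3^2 * x6 * y6 * a * g + (-1:ℝ) * x2^2 * x3 * y3 * y6^2 * a * g + (-2:ℝ) * x2^2 * y2 * y3 * x6 *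 y6 * a * g + (-1:ℝ) * x2^2 * y2 * x3 * y6^2 * a * g + (1:ℝ) * x2^3 * y3 * y6^2 * a * g) * hc

private lemma dep_of_not_li {u v : Pt} (h : ¬ LinearIndependent ℝ ![u, v]) :
    ∃ s t : ℝ, (s ≠ 0 ∨ t ≠ 0) ∧ s • u + t • v = 0 := by
  rw [LinearIndependent.pair_iff] at h
  push_neg at h
  obtain ⟨s, t, h1, h2⟩ := h
  exact ⟨s, t, by tauto, h1⟩

private lemma ratio_of_not_li {u v : Pt} (hu : u ≠ 0) (h : ¬ LinearIndependent ℝ ![u, v]) :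
    ∃ a : ℝ, v = a • u := by
  obtain ⟨s, t, hst, heq⟩ := dep_of_not_li h
  by_cases ht : t = 0
  · subst ht
    simp only [zero_smul, add_zero, smul_eq_zero] at heq
    rcases heq with h0 | h0
    · subst h0; tauto
    · exact absurd h0 hu
  · refine ⟨-s / t, ?_⟩
    have : t • v = (-s) • u := by
      have h9 : t • v = -(s • u) + (s • u + t • v) := by module
      rw [heq, add_zero, ← neg_smul] at h9
      exact h9
    have h2 : v = t⁻¹ • ((-s) • u) := by
      rw [← this, inv_smul_smul₀ ht]
    rw [h2, smul_smul]
    congr 1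
    field_simp

private lemma cross_eq_zero_of_not_li {u v : Pt} (h : ¬ LinearIndependent ℝ ![u, v]) :
    cross u v = 0 := by
  obtain ⟨s, t, hst, heq⟩ := dep_of_not_li h
  have e0 : s * u 0 + t * v 0 = 0 := by
    have := congrArg (fun w : Pt => w 0) heq
    simpa [PiLp.add_apply, PiLp.smul_apply, smul_eq_mul] using this
  have e1 : s * u 1 + t * v 1 = 0 := by
    have := congrArg (fun w : Pt => w 1) heq
    simpa [PiLp.add_apply, PiLp.smul_apply, smul_eq_mul] using this
  rcases hst with hs | ht
  · have hse : s * cross u v = 0 := by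
      unfold cross
      linear_combination v 1 * e0 - v 0 * e1
    exact (mul_eq_zero.mp hse).resolve_left hs
  · have hte : t * cross u v = 0 := by
      unfold cross
      linear_combination (-(u 1)) * e0 + u 0 * e1
    exact (mul_eq_zero.mp hte).resolve_left ht

/-- (Converse of Pascal-type lemma.) -/
theorem statement_2 (P1 P2 P3 P4 P5 P6 : Pt)
    (hdist : List.Pairwise (· ≠ ·) [P1, P2, P3, P4, P5, P6])
    (h1 : Para P1 P6 P2 P5) (h2 : Para P2 P3 P1 P4) (h3 : Para P4 P5 P3 P6) :
    OnConic {P1, P2, P3, P4, P5, P6} := by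
  have h16 : P1 ≠ P6 := by simp only [List.pairwise_cons] at hdist; aesop
  have h23 : P2 ≠ P3 := by simp only [List.pairwise_cons] at hdist; aesop
  obtain ⟨a, ha⟩ := ratio_of_not_li (sub_ne_zero.mpr (fun h => h16 h.symm)) h1
  obtain ⟨g, hg⟩ := ratio_of_not_li (sub_ne_zero.mpr (fun h => h23 h.symm)) h2
  have hc := cross_eq_zero_of_not_li h3
  have ha0 : P5 0 - P2 0 = a * (P6 0 - P1 0) := by
    have := congrArg (fun w : Pt => w 0) ha; simpa using this
  have ha1 : P5 1 - P2 1 = a * (P6 1 - P1 1) := by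
    have := congrArg (fun w : Pt => w 1) ha; simpa using this
  have hg0 : P4 0 - P1 0 = g * (P3 0 - P2 0) := by
    have := congrArg (fun w : Pt => w 0) hg; simpa using this
  have hg1 : P4 1 - P1 1 = g * (P3 1 - P2 1) := by
    have := congrArg (fun w : Pt => w 1) hg; simpa using this
  have hc2 : (P5 0 - P4 0) * (P6 1 - P3 1) - (P5 1 - P4 1) * (P6 0 - P3 0) = 0 := by
    simpa [cross] using hc
  have hdet : (!![(P2 0 - P1 0)^2, (P2 0 - P1 0)*(P2 1 - P1 1), (P2 1 - P1 1)^2, P2 0 - P1 0, P2 1 - P1 1;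
      (P3 0 - P1 0)^2, (P3 0 - P1 0)*(P3 1 - P1 1), (P3 1 - P1 1)^2, P3 0 - P1 0, P3 1 - P1 1;
      (P4 0 - P1 0)^2, (P4 0 - P1 0)*(P4 1 - P1 1), (P4 1 - P1 1)^2, P4 0 - P1 0, P4 1 - P1 1;
      (P5 0 - P1 0)^2, (P5 0 - P1 0)*(P5 1 - P1 1), (P5 1 - P1 1)^2, P5 0 - P1 0, P5 1 - P1 1;
      (P6 0 - P1 0)^2, (P6 0 - P1 0)*(P6 1 - P1 1), (P6 1 - P1 1)^2, P6 0 - P1 0, P6 1 - P1 1] :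
      Matrix (Fin 5) (Fin 5) ℝ).det = 0 :=
    key5 _ _ _ _ _ _ _ _ _ _ a g (by linear_combination hg0) (by linear_combination hg1)
      (by linear_combination ha0) (by linear_combination ha1) (by linear_combination hc2)
  obtain ⟨v, hv0, hv⟩ := Matrix.exists_mulVec_eq_zero_iff.mpr hdet
  have r0 := congrFun hv 0
  have r1 := congrFun hv 1
  have r2 := congrFun hv 2
  have r3 := congrFun hv 3
  have r4 := congrFun hv 4
  simp only [Matrix.mulVec, dotProduct, Fin.sum_univ_five, Pi.zero_apply,
    Matrix.cons_val', Matrix.cons_val_zero, Matrix.cons_val_one, Matrix.head_cons,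
    Matrix.empty_val', Matrix.cons_val_fin_one, Matrix.head_fin_const, Matrix.cons_val_two,
    Matrix.cons_val_three, Matrix.cons_val_four, Matrix.tail_cons, Matrix.of_apply] at r0 r1 r2 r3 r4
  refine ⟨v 0, v 1, v 2,
    v 3 - 2 * v 0 * P1 0 - v 1 * P1 1,
    v 4 - v 1 * P1 0 - 2 * v 2 * P1 1,
    v 0 * P1 0 ^ 2 + v 1 * (P1 0 * P1 1) + v 2 * P1 1 ^ 2 - v 3 * P1 0 - v 4 * P1 1, ?_, ?_⟩
  · intro hcon
    simp only [Prod.mk.injEq] at hcon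
    obtain ⟨e1, e2, e3, e4, e5, -⟩ := hcon
    have e4' : v 3 = 0 := by linear_combination e4 + 2 * P1 0 * e1 + P1 1 * e2
    have e5' : v 4 = 0 := by linear_combination e5 + P1 0 * e2 + 2 * P1 1 * e3
    apply hv0
    funext i
    fin_cases i <;> simpa using by first | exact e1 | exact e2 | exact e3 | exact e4' | exact e5'
  · intro P hP
    simp only [Set.mem_insert_iff, Set.mem_singleton_iff] at hP
    unfold conicEval
    rcases hP with rfl | rfl | rfl | rfl | rfl | rfl
    · ring
    · linear_combination r0
    · linear_combination r1
    · linear_combination r2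
    · linear_combination r3
    · linear_combination r4
end
end

section
/- Let n ≥ 5 and let A₁, …, Aₙ be the vertices of a convex polygon in cyclic order such that A₂A₃ is not parallel to A₁A₄ and dist(A₄, line A₂A₃) < dist(A₁, line A₂A₃). Then the direction of A₂A₃ is forbidden at A₄; that is, for every k ≠ 4, the segment A₄A_k is not parallel to A₂A₃. -/
open Real

noncomputable section

lemma pt_sub_apply (P Q : Pt) (i : Fin 2) : (P - Q) i = P i - Q i := rfl
lemma pt_add_apply (P Q : Pt) (i : Fin 2) : (P + Q) i = P i + Q i := rfl
lemma pt_smul_apply (c : ℝ) (P : Pt) (i : Fin 2) : (c • P) i = c * P i := rfl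
lemma pt_zero_apply (i : Fin 2) : (0 : Pt) i = 0 := rfl

lemma pt_ext {P Q : Pt} (h0 : P 0 = Q 0) (h1 : P 1 = Q 1) : P = Q :=
  PiLp.ext fun i => by fin_cases i <;> assumption

lemma norm_pt (v : Pt) : ‖v‖ = Real.sqrt (v 0 ^ 2 + v 1 ^ 2) := by
  rw [EuclideanSpace.norm_eq]
  simp [Fin.sum_univ_two, Real.norm_eq_abs, sq_abs]

lemma abs_cross_le (u w : Pt) : |cross u w| ≤ ‖u‖ * ‖w‖ := by
  rw [norm_pt, norm_pt, ← Real.sqrt_mul (by positivity),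
    show |cross u w| = Real.sqrt (cross u w ^ 2) from (Real.sqrt_sq_eq_abs _).symm]
  apply Real.sqrt_le_sqrt
  simp only [cross]
  nlinarith [sq_nonneg (u 0 * w 0 + u 1 * w 1)]

lemma linIndep_of_cross_ne (u w : Pt) (h : cross u w ≠ 0) :
    LinearIndependent ℝ ![u, w] := by
  rw [LinearIndependent.pair_iff]
  intro s t hst
  have h0 : s * u 0 + t * w 0 = 0 := congrArg (fun x : Pt => x 0) hst
  have h1 : s * u 1 + t * w 1 = 0 := congrArg (fun x : Pt => x 1) hst
  simp only [cross] at h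
  have hs : s * (u 0 * w 1 - u 1 * w 0) = 0 := by linear_combination w 1 * h0 - w 0 * h1
  have ht : t * (u 0 * w 1 - u 1 * w 0) = 0 := by linear_combination u 0 * h1 - u 1 * h0
  exact ⟨by rcases mul_eq_zero.mp hs with h' | h'; exact h'; exact absurd h' h,
         by rcases mul_eq_zero.mp ht with h' | h'; exact h'; exact absurd h' h⟩

lemma eq_smul_of_cross_eq_zero {v w : Pt} (hv : v ≠ 0) (h : cross v w = 0) :
    ∃ c : ℝ, w = c • v := by
  simp only [cross] at h
  by_cases h0 : v 0 = 0
  · have h1 : v 1 ≠ 0 := by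
      intro h1; exact hv (pt_ext (h0.trans (pt_zero_apply 0).symm) (h1.trans (pt_zero_apply 1).symm))
    refine ⟨w 1 / v 1, pt_ext ?_ ?_⟩
    · rw [pt_smul_apply, h0, mul_zero]
      rw [h0] at h
      have h' : v 1 * w 0 = 0 := by linarith
      exact ((mul_eq_zero.mp h').resolve_left h1)
    · rw [pt_smul_apply, div_mul_cancel₀ _ h1]
  · refine ⟨w 0 / v 0, pt_ext ?_ ?_⟩
    · rw [pt_smul_apply, div_mul_cancel₀ _ h0]
    · rw [pt_smul_apply, div_mul_eq_mul_div, eq_div_iff h0]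
      linear_combination h

lemma distToLine_eq (P Q R : Pt) (hQR : Q ≠ R) :
    distToLine P Q R = |cross (R - Q) (P - Q)| / ‖R - Q‖ := by
  have hvne : R - Q ≠ 0 := sub_ne_zero.mpr (Ne.symm hQR)
  have hnorm : 0 < ‖R - Q‖ := norm_pos_iff.mpr hvne
  have hD : 0 < (R - Q) 0 ^ 2 + (R - Q) 1 ^ 2 := by
    rw [norm_pt] at hnorm; exact Real.sqrt_pos.mp hnorm
  have hmem : ∀ X : Pt, X ∈ (affineSpan ℝ ({Q, R} : Set Pt) : Set Pt) ↔
      ∃ r : ℝ, X = r • (R - Q) + Q := by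
    intro X
    constructor
    · intro hX
      have h2 : ((X - Q) +ᵥ Q) ∈ affineSpan ℝ ({Q, R} : Set Pt) := by
        simpa [vadd_eq_add, sub_add_cancel] using hX
      obtain ⟨r, hr⟩ := vadd_left_mem_affineSpan_pair.mp h2
      rw [vsub_eq_sub] at hr
      exact ⟨r, by rw [hr]; abel⟩
    · rintro ⟨r, rfl⟩
      have := smul_vsub_vadd_mem_affineSpan_pair (k := ℝ) r Q R
      simpa [vsub_eq_sub, vadd_eq_add] using this
  set v := R - Q with hvdef
  set p := P - Q with hpdef
  set s₀ := (v 0 * p 0 + v 1 * p 1) / (v 0 ^ 2 + v 1 ^ 2) with hs₀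
  have hdistval : dist P (s₀ • v + Q) = |cross v p| / ‖v‖ := by
    have c0 : (P - (s₀ • v + Q)) 0 = p 0 - s₀ * v 0 := by
      simp [pt_sub_apply, pt_add_apply, pt_smul_apply, hpdef]; ring
    have c1 : (P - (s₀ • v + Q)) 1 = p 1 - s₀ * v 1 := by
      simp [pt_sub_apply, pt_add_apply, pt_smul_apply, hpdef]; ring
    rw [dist_eq_norm, norm_pt, norm_pt, c0, c1,
      show |cross v p| = Real.sqrt (cross v p ^ 2) from (Real.sqrt_sq_eq_abs _).symm,
      ← Real.sqrt_div (sq_nonneg _)]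
    congr 1
    rw [hs₀]
    simp only [cross]
    field_simp
    ring
  refine le_antisymm ?_ ?_
  · calc distToLine P Q R ≤ dist P (s₀ • v + Q) :=
          Metric.infDist_le_dist_of_mem ((hmem _).mpr ⟨s₀, rfl⟩)
      _ = _ := hdistval
  · by_contra hcon
    push_neg at hcon
    have hne : (affineSpan ℝ ({Q, R} : Set Pt) : Set Pt).Nonempty :=
      ⟨Q, left_mem_affineSpan_pair ℝ Q R⟩
    obtain ⟨Y, hYmem, hYlt⟩ := (Metric.infDist_lt_iff hne).mp hcon
    obtain ⟨r, rfl⟩ := (hmem Y).mp hYmem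
    have hcr : cross v (P - (r • v + Q)) = cross v p := by
      simp only [cross, pt_sub_apply, pt_add_apply, pt_smul_apply, hpdef]; ring
    have hle := abs_cross_le v (P - (r • v + Q))
    rw [hcr] at hle
    rw [dist_eq_norm, lt_div_iff₀ hnorm] at hYlt
    nlinarith

lemma zmod_cast_ne {n : ℕ} (a b : ℕ) (ha : a < n) (hb : b < n) (hab : a ≠ b) :
    (a : ZMod n) ≠ (b : ZMod n) := by
  haveI : NeZero n := ⟨by omega⟩
  intro h
  have := (ZMod.natCast_eq_natCast_iff' a b n).mp h
  rw [Nat.mod_eq_of_lt ha, Nat.mod_eq_of_lt hb] at this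
  exact hab this

set_option maxHeartbeats 1000000 in
lemma core {n : ℕ} (hn : 5 ≤ n) (A : ZMod n → Pt)
    (hinj : Function.Injective A)
    (hext : ∀ i, A i ∈ Set.extremePoints ℝ (convexHull ℝ (Set.range A)))
    (ε : ℝ) (hε : ε = 1 ∨ ε = -1)
    (hor : ∀ i j, j ≠ i → j ≠ i + 1 → 0 < ε * cross (A (i + 1) - A i) (A j - A i))
    (hdist : distToLine (A 4) (A 2) (A 3) < distToLine (A 1) (A 2) (A 3))
    (k : ZMod n) (hk : k ≠ 4) (hpar : cross (A k - A 4) (A 3 - A 2) = 0) : False := by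
  -- index distinctness
  have hne : ∀ a b : ℕ, a < n → b < n → a ≠ b → (a : ZMod n) ≠ (b : ZMod n) :=
    fun a b ha hb hab => zmod_cast_ne a b ha hb hab
  have ne12 : (1 : ZMod n) ≠ 2 := by
    have := hne 1 2 (by omega) (by omega) (by omega); push_cast at this; exact this
  have ne13 : (1 : ZMod n) ≠ 3 := by
    have := hne 1 3 (by omega) (by omega) (by omega); push_cast at this; exact this
  have ne23 : (2 : ZMod n) ≠ 3 := by
    have := hne 2 3 (by omega) (by omega) (by omega); push_cast at this; exact this
  have ne41 : (4 : ZMod n) ≠ 1 := by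
    have := hne 4 1 (by omega) (by omega) (by omega); push_cast at this; exact this
  have ne42 : (4 : ZMod n) ≠ 2 := by
    have := hne 4 2 (by omega) (by omega) (by omega); push_cast at this; exact this
  have ne43 : (4 : ZMod n) ≠ 3 := by
    have := hne 4 3 (by omega) (by omega) (by omega); push_cast at this; exact this
  have hεne : ε ≠ 0 := by rcases hε with h | h <;> rw [h] <;> norm_num
  have hεabs : |ε| = 1 := by rcases hε with h | h <;> rw [h] <;> norm_num
  set v : Pt := A 3 - A 2 with hvdef
  have hA23 : A 2 ≠ A 3 := fun h => ne23 (hinj h)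
  have hv : v ≠ 0 := sub_ne_zero.mpr (Ne.symm hA23)
  have h21 : (2 : ZMod n) + 1 = 3 := by norm_num
  have h11 : (1 : ZMod n) + 1 = 2 := by norm_num
  -- f positivity
  have hf : ∀ j : ZMod n, j ≠ 2 → j ≠ 3 → 0 < ε * cross v (A j - A 2) := by
    intro j hj2 hj3
    have := hor 2 j hj2 (by rw [h21]; exact hj3)
    rwa [h21] at this
  have hf4 : 0 < ε * cross v (A 4 - A 2) := hf 4 ne42 ne43
  have hf1 : 0 < ε * cross v (A 1 - A 2) := hf 1 ne12 ne13
  -- distance comparison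
  rw [distToLine_eq _ _ _ hA23, distToLine_eq _ _ _ hA23] at hdist
  have hnv : 0 < ‖v‖ := norm_pos_iff.mpr hv
  have habslt : |cross v (A 4 - A 2)| < |cross v (A 1 - A 2)| := by
    rw [div_lt_div_iff₀ hnv hnv] at hdist
    exact lt_of_mul_lt_mul_right hdist (le_of_lt hnv)
  have habs : ∀ P : Pt, 0 < ε * cross v (P - A 2) → |cross v (P - A 2)| = ε * cross v (P - A 2) := by
    intro P hP
    rw [show |cross v (P - A 2)| = |ε| * |cross v (P - A 2)| by rw [hεabs]; ring,
      ← abs_mul, abs_of_pos hP]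
  rw [habs _ hf4, habs _ hf1] at habslt
  -- level equality from parallelism
  have hfk : ε * cross v (A k - A 2) = ε * cross v (A 4 - A 2) := by
    simp only [cross, pt_sub_apply, hvdef] at hpar ⊢
    linear_combination (-ε) * hpar
  have hk2 : k ≠ 2 := by
    rintro rfl
    have h0 : cross v (A 2 - A 2) = 0 := by simp [cross, pt_sub_apply]
    rw [h0, mul_zero] at hfk
    linarith
  have hk3 : k ≠ 3 := by
    rintro rfl
    have h0 : cross v (A 3 - A 2) = 0 := by
      simp only [cross, pt_sub_apply, hvdef]; ring
    rw [h0, mul_zero] at hfk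
    linarith
  have hk1 : k ≠ 1 := by
    rintro rfl
    linarith
  -- A k = A 4 + α • v
  have hcr : cross v (A k - A 4) = 0 := by
    simp only [cross, pt_sub_apply, hvdef] at hpar ⊢
    linear_combination -hpar
  obtain ⟨α, hα⟩ := eq_smul_of_cross_eq_zero hv hcr
  have hαne : α ≠ 0 := by
    rintro rfl
    rw [zero_smul, sub_eq_zero] at hα
    exact hk (hinj hα)
  -- the point X on segment [A2, A1] at the same level
  set c1 : ℝ := cross v (A 1 - A 2) with hc1def
  set c4 : ℝ := cross v (A 4 - A 2) with hc4def
  have hc1ne : c1 ≠ 0 := by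
    intro h; rw [h, mul_zero] at hf1; linarith
  set t : ℝ := (ε * c4) / (ε * c1) with htdef
  have ht0 : 0 < t := div_pos hf4 hf1
  have ht1 : t < 1 := by
    rw [htdef, div_lt_one hf1]; linarith
  set X : Pt := (1 - t) • A 2 + t • A 1 with hXdef
  have htc : t * c1 = c4 := by
    rw [htdef]; field_simp
  have hfX : cross v (X - A 4) = 0 := by
    have e1 : cross v (X - A 4) = t * c1 - c4 := by
      simp only [hXdef, hc1def, hc4def, cross, pt_sub_apply, pt_add_apply, pt_smul_apply, hvdef]
      ring
    rw [e1, htc, sub_self]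
  obtain ⟨β, hβ⟩ := eq_smul_of_cross_eq_zero hv hfX
  -- hull memberships
  have hXhull : X ∈ convexHull ℝ (Set.range A) := by
    refine (convex_convexHull ℝ _) (subset_convexHull ℝ _ (Set.mem_range_self 2))
      (subset_convexHull ℝ _ (Set.mem_range_self 1)) (by linarith) (le_of_lt ht0) (by ring)
  have h4hull : A 4 ∈ convexHull ℝ (Set.range A) :=
    subset_convexHull ℝ _ (Set.mem_range_self 4)
  have hkhull : A k ∈ convexHull ℝ (Set.range A) :=
    subset_convexHull ℝ _ (Set.mem_range_self k)
  -- g facts (edge A1 A2)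
  have hg : ∀ j : ZMod n, j ≠ 1 → j ≠ 2 → 0 < ε * cross (A 2 - A 1) (A j - A 1) := by
    intro j hj1 hj2
    have := hor 1 j hj1 (by rw [h11]; exact hj2)
    rwa [h11] at this
  have hg4 : 0 < ε * cross (A 2 - A 1) (A 4 - A 1) := hg 4 ne41 ne42
  have hgk : 0 < ε * cross (A 2 - A 1) (A k - A 1) := hg k hk1 hk2
  have hgX : cross (A 2 - A 1) (X - A 1) = 0 := by
    simp only [hXdef, cross, pt_sub_apply, pt_add_apply, pt_smul_apply]; ring
  -- the three impossible configurations
  have hAk : A k = A 4 + α • v := by rw [← hα]; abel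
  have hX4 : X = A 4 + β • v := by rw [← hβ]; abel
  have C1 : ∀ s : ℝ, 0 ≤ s → s ≤ 1 → s * α = β → False := by
    intro s hs0 hs1 hsα
    have hcomb : X = (1 - s) • A 4 + s • A k := by
      rw [hAk, hX4, ← hsα]; module
    have egX : ε * cross (A 2 - A 1) (X - A 1) =
        (1 - s) * (ε * cross (A 2 - A 1) (A 4 - A 1)) +
        s * (ε * cross (A 2 - A 1) (A k - A 1)) := by
      rw [hcomb]; simp only [cross, pt_sub_apply, pt_add_apply, pt_smul_apply]; ring
    rw [hgX, mul_zero] at egX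
    rcases hs0.eq_or_lt with hs | hs
    · rw [← hs] at egX; linarith
    · nlinarith [mul_pos hs hgk, mul_nonneg (by linarith : (0:ℝ) ≤ 1 - s) hg4.le]
  have C2 : ∀ b : ℝ, 0 < b → b < 1 → b * β = α → False := by
    intro b hb0 hb1 hbβ
    have hcomb : A k = (1 - b) • A 4 + b • X := by
      rw [hAk, hX4, ← hbβ]; module
    have hopen : A k ∈ openSegment ℝ (A 4) X := by
      show ∃ a b' : ℝ, 0 < a ∧ 0 < b' ∧ a + b' = 1 ∧ a • A 4 + b' • X = A k
      exact ⟨1 - b, b, by linarith, hb0, by ring, hcomb.symm⟩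
    have := (mem_extremePoints.mp (hext k)).2 (A 4) h4hull X hXhull hopen
    have h4k : A 4 = A k := this.1
    have : α • v = 0 := by rw [← hα, h4k, sub_self]
    rcases smul_eq_zero.mp this with h' | h'
    · exact hαne h'
    · exact hv h'
  have C3 : ∀ c : ℝ, 0 < c → c < 1 → c * (β - α) = -α → False := by
    intro c hc0 hc1 hcβ
    have hcomb : A 4 = (1 - c) • A k + c • X := by
      have : (1 - c) • A k + c • X = A 4 + (α + c * (β - α)) • v := by
        rw [hAk, hX4]; module
      rw [this, hcβ]
      simp only [add_neg_cancel, zero_smul, add_zero]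
    have hopen : A 4 ∈ openSegment ℝ (A k) X := by
      show ∃ a b' : ℝ, 0 < a ∧ 0 < b' ∧ a + b' = 1 ∧ a • A k + b' • X = A 4
      exact ⟨1 - c, c, by linarith, hc0, by ring, hcomb.symm⟩
    have := (mem_extremePoints.mp (hext 4)).2 (A k) hkhull X hXhull hopen
    have hk4 : A k = A 4 := this.1
    have : α • v = 0 := by rw [← hα, hk4, sub_self]
    rcases smul_eq_zero.mp this with h' | h'
    · exact hαne h'
    · exact hv h'
  -- case analysis on α, β
  rcases hαne.lt_or_gt with hαneg | hαpos
  · rcases lt_or_ge 0 β with hβpos | hβnp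
    · -- 0 strictly between α and β
      refine C3 ((-α) / (β - α)) (div_pos (by linarith) (by linarith)) ?_ ?_
      · rw [div_lt_one (by linarith)]; linarith
      · exact div_mul_cancel₀ _ (ne_of_gt (by linarith : (0:ℝ) < β - α))
    · rcases le_or_gt α β with hβge | hβlt
      · -- α ≤ β ≤ 0 : C1 with s = β/α = (-β)/(-α)
        refine C1 (β / α) ?_ ?_ (div_mul_cancel₀ β hαne)
        · rw [show β / α = (-β) / (-α) by rw [neg_div_neg_eq]]
          exact div_nonneg (by linarith) (by linarith)
        · rw [show β / α = (-β) / (-α) by rw [neg_div_neg_eq], div_le_one (by linarith)]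
          linarith
      · -- β < α < 0 : C2 with b = α/β = (-α)/(-β)
        have hβne : β ≠ 0 := by intro h; rw [h] at hβlt; linarith
        refine C2 (α / β) ?_ ?_ (div_mul_cancel₀ α hβne)
        · rw [show α / β = (-α) / (-β) by rw [neg_div_neg_eq]]
          exact div_pos (by linarith) (by linarith)
        · rw [show α / β = (-α) / (-β) by rw [neg_div_neg_eq], div_lt_one (by linarith)]
          linarith
  · rcases lt_or_ge β 0 with hβneg | hβnn
    · -- 0 strictly between
      have hrw : (-α) / (β - α) = α / (α - β) := by
        rw [show β - α = -(α - β) from by ring, div_neg, neg_div, neg_neg]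
      refine C3 ((-α) / (β - α)) ?_ ?_ ?_
      · rw [hrw]
        exact div_pos hαpos (by linarith)
      · rw [hrw, div_lt_one (by linarith)]
        linarith
      · exact div_mul_cancel₀ _ (ne_of_lt (by linarith : β - α < 0))
    · rcases le_or_gt β α with hβle | hβgt
      · refine C1 (β / α) (div_nonneg hβnn (le_of_lt hαpos)) ?_ (div_mul_cancel₀ β hαne)
        rw [div_le_one hαpos]; exact hβle
      · have hβne : β ≠ 0 := by intro h; rw [h] at hβgt; linarith
        refine C2 (α / β) (div_pos hαpos (by linarith)) ?_ (div_mul_cancel₀ α hβne)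
        rw [div_lt_one (by linarith)]; exact hβgt


/-- The direction of `A₂A₃` is forbidden at `A₄`. -/
theorem statement_10 (n : ℕ) (hn : 5 ≤ n) (A : ZMod n → Pt)
    (hconv : ConvexCyclic A)
    (hnp : ¬ Para (A 2) (A 3) (A 1) (A 4))
    (hdist : distToLine (A 4) (A 2) (A 3) < distToLine (A 1) (A 2) (A 3)) :
    ∀ k : ZMod n, k ≠ 4 → ¬ Para (A 4) (A k) (A 2) (A 3) := by
  intro k hk hp
  obtain ⟨hinj, hext, hor⟩ := hconv
  have hcross : cross (A k - A 4) (A 3 - A 2) = 0 := by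
    by_contra hc
    exact hp (linIndep_of_cross_ne _ _ hc)
  rcases hor with hor | hor
  · exact core hn A hinj hext 1 (Or.inl rfl)
      (fun i j h1 h2 => by rw [one_mul]; exact hor i j h1 h2) hdist k hk hcross
  · exact core hn A hinj hext (-1) (Or.inr rfl)
      (fun i j h1 h2 => by have := hor i j h1 h2; linarith) hdist k hk hcross
end
end

section
/- Let n ≥ 6 and let A₁, …, Aₙ be the vertices of a convex polygon in cyclic order. Suppose that 3 ≤ i₁, i₂ ≤ n − 2 and 4 ≤ j₁, j₂ ≤ n are indices with A₂A_{i₁} ∥ A₁A_{j₁} and A₂A_{i₂} ∥ A₁A_{j₂}. Then i₁ < i₂ if and only if j₁ < j₂. -/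
open Real

noncomputable section

namespace S12

lemma sub_ap (a b : Pt) (i : Fin 2) : (a - b) i = a i - b i := rfl

lemma crossGP (u v w z : Pt) :
    cross u v * cross w z + cross w u * cross v z = cross u z * cross w v := by
  simp only [cross]; ring

lemma cross_anti (a b : Pt) : cross a b = -cross b a := by simp only [cross]; ring

lemma cross_cyclic (a b c : Pt) : cross (b - a) (c - a) = cross (c - b) (a - b) := by
  simp only [cross, sub_ap]; ring

lemma cross_shift (a b c : Pt) : cross (b - c) (a - b) = cross (b - c) (a - c) := by
  simp only [cross, sub_ap]; ring

lemma indep_of_cross {a b : Pt} (h : cross a b ≠ 0) : LinearIndependent ℝ ![a, b] := by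
  rw [LinearIndependent.pair_iff]
  intro s t hst
  have h0 : s * a 0 + t * b 0 = 0 := by
    have := congr_arg (fun v : Pt => v 0) hst; simpa using this
  have h1 : s * a 1 + t * b 1 = 0 := by
    have := congr_arg (fun v : Pt => v 1) hst; simpa using this
  have hs : s * cross a b = 0 := by
    simp only [cross]; linear_combination b 1 * h0 - b 0 * h1
  have ht : t * cross a b = 0 := by
    simp only [cross]; linear_combination a 0 * h1 - a 1 * h0
  exact ⟨by rcases mul_eq_zero.mp hs with h' | h'; exact h'; exact absurd h' h,
         by rcases mul_eq_zero.mp ht with h' | h'; exact h'; exact absurd h' h⟩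

lemma ne_of_eps_pos {ε x : ℝ} (h : 0 < ε * x) : x ≠ 0 := by
  intro h0; rw [h0, mul_zero] at h; exact lt_irrefl 0 h

lemma transfer (a b c w : Pt) (h1 : cross a c = 0) (h2 : cross b c = 0) :
    cross a b * cross w c = 0 := by
  have gp := crossGP a c w b
  have anti : cross c b = -cross b c := cross_anti c b
  linear_combination (-1 : ℝ) * gp + cross w b * h1 + cross w a * anti - cross w a * h2

lemma cast_ne_cast {n a b : ℕ} (ha : a < n) (hb : b < n) (h : a ≠ b) :
    (a : ZMod n) ≠ (b : ZMod n) := by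
  haveI : NeZero n := ⟨by omega⟩
  intro he
  exact h (by rw [← ZMod.val_cast_of_lt ha, ← ZMod.val_cast_of_lt hb, he])

lemma cast_ne_one {n t : ℕ} (hn : 6 ≤ n) (h2 : 2 ≤ t) (hn' : t ≤ n) : (t : ZMod n) ≠ 1 := by
  have h1 : ((1 : ℕ) : ZMod n) = 1 := Nat.cast_one
  rcases eq_or_lt_of_le hn' with he | hlt
  · subst he
    rw [ZMod.natCast_self, ← h1, ← Nat.cast_zero]
    exact cast_ne_cast (by omega) (by omega) (by omega)
  · rw [← h1]; exact cast_ne_cast hlt (by omega) (by omega)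

lemma cast_ne_two {n t : ℕ} (hn : 6 ≤ n) (h3 : 3 ≤ t) (hn' : t ≤ n) : (t : ZMod n) ≠ 2 := by
  have h2 : ((2 : ℕ) : ZMod n) = 2 := by norm_num
  rcases eq_or_lt_of_le hn' with he | hlt
  · subst he
    rw [ZMod.natCast_self, ← h2, ← Nat.cast_zero]
    exact cast_ne_cast (by omega) (by omega) (by omega)
  · rw [← h2]; exact cast_ne_cast hlt (by omega) (by omega)

lemma chain (x : ℕ → Pt) (w : Pt) (ε : ℝ) (p : ℕ) :
    ∀ q, p < q →
    (∀ t, p ≤ t → t ≤ q → 0 < ε * cross w (x t)) →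
    (∀ t, p ≤ t → t < q → 0 < ε * cross (x t) (x (t + 1))) →
    0 < ε * cross (x p) (x q) := by
  intro q
  induction q with
  | zero => intro h; omega
  | succ q ih =>
    intro hpq hw hc
    rcases Nat.lt_or_ge p q with h | h
    · have h1 : 0 < ε * cross (x p) (x q) :=
        ih h (fun t ht ht' => hw t ht (by omega)) (fun t ht ht' => hc t ht (by omega))
      have h2 : 0 < ε * cross (x q) (x (q + 1)) := hc q (by omega) (by omega)
      have h3 : 0 < ε * cross w (x p) := hw p le_rfl (by omega)
      have h4 : 0 < ε * cross w (x q) := hw q (by omega) (by omega)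
      have h5 : 0 < ε * cross w (x (q + 1)) := hw (q + 1) (by omega) le_rfl
      have gp := crossGP (x p) (x q) w (x (q + 1))
      have e1 : (ε * cross (x p) (x q)) * (ε * cross w (x (q + 1)))
          + (ε * cross w (x p)) * (ε * cross (x q) (x (q + 1)))
          = (ε * cross (x p) (x (q + 1))) * (ε * cross w (x q)) := by
        linear_combination (ε ^ 2) * gp
      have hp : 0 < (ε * cross (x p) (x (q + 1))) * (ε * cross w (x q)) := by
        rw [← e1]; exact add_pos (mul_pos h1 h5) (mul_pos h3 h2)
      nlinarith [hp, h4]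
    · have hpq' : p = q := by omega
      subst hpq'
      exact hc p le_rfl (by omega)

variable {n : ℕ}

lemma half1 (hn : 6 ≤ n) (A : ZMod n → Pt) (ε : ℝ)
    (hE : ∀ i j : ZMod n, j ≠ i → j ≠ i + 1 → 0 < ε * cross (A (i + 1) - A i) (A j - A i))
    {t : ℕ} (h3 : 3 ≤ t) (hn' : t ≤ n) : 0 < ε * cross (A 2 - A 1) (A t - A 1) := by
  have h := hE 1 t (cast_ne_one hn (by omega) hn')
    (by rw [one_add_one_eq_two]; exact cast_ne_two hn h3 hn')
  rwa [one_add_one_eq_two] at h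

lemma half2 (hn : 6 ≤ n) (A : ZMod n → Pt) (ε : ℝ)
    (hE : ∀ i j : ZMod n, j ≠ i → j ≠ i + 1 → 0 < ε * cross (A (i + 1) - A i) (A j - A i))
    {t : ℕ} (h3 : 3 ≤ t) (hn' : t ≤ n - 2) : 0 < ε * cross (A 2 - A 1) (A t - A 2) := by
  rw [cross_shift (A t) (A 2) (A 1)]
  exact half1 hn A ε hE h3 (by omega)

lemma factA (hn : 6 ≤ n) (A : ZMod n → Pt) (ε : ℝ)
    (hE : ∀ i j : ZMod n, j ≠ i → j ≠ i + 1 → 0 < ε * cross (A (i + 1) - A i) (A j - A i))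
    {p q : ℕ} (hp : 3 ≤ p) (hpq : p < q) (hq : q ≤ n - 2) :
    0 < ε * cross (A p - A 2) (A q - A 2) := by
  refine chain (fun t => A (t : ZMod n) - A 2) (A 2 - A 1) ε p q hpq ?_ ?_
  · intro t ht ht'
    exact half2 hn A ε hE (by omega) (by omega)
  · intro t ht ht'
    have hcast : ((t + 1 : ℕ) : ZMod n) = (t : ZMod n) + 1 := by push_cast; ring
    have h := hE (t : ZMod n) 2 (cast_ne_two hn (by omega) (by omega)).symm
      (by rw [← hcast]; exact (cast_ne_two hn (by omega) (by omega)).symm)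
    rw [hcast, cross_cyclic (A 2) (A (t : ZMod n)) (A ((t : ZMod n) + 1))]
    exact h

lemma factB (hn : 6 ≤ n) (A : ZMod n → Pt) (ε : ℝ)
    (hE : ∀ i j : ZMod n, j ≠ i → j ≠ i + 1 → 0 < ε * cross (A (i + 1) - A i) (A j - A i))
    {p q : ℕ} (hp : 4 ≤ p) (hpq : p < q) (hq : q ≤ n) :
    0 < ε * cross (A p - A 1) (A q - A 1) := by
  refine chain (fun t => A (t : ZMod n) - A 1) (A 2 - A 1) ε p q hpq ?_ ?_
  · intro t ht ht'
    exact half1 hn A ε hE (by omega) (by omega)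
  · intro t ht ht'
    have hcast : ((t + 1 : ℕ) : ZMod n) = (t : ZMod n) + 1 := by push_cast; ring
    have h := hE (t : ZMod n) 1 (cast_ne_one hn (by omega) (by omega)).symm
      (by rw [← hcast]; exact (cast_ne_one hn (by omega) (by omega)).symm)
    rw [hcast, cross_cyclic (A 1) (A (t : ZMod n)) (A ((t : ZMod n) + 1))]
    exact h

lemma key (hn : 6 ≤ n) (A : ZMod n → Pt) (ε : ℝ)
    (hE : ∀ i j : ZMod n, j ≠ i → j ≠ i + 1 → 0 < ε * cross (A (i + 1) - A i) (A j - A i))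
    (i1 i2 j1 j2 : ℕ)
    (hi1 : 3 ≤ i1) (hi1' : i1 ≤ n - 2) (hi2 : 3 ≤ i2) (hi2' : i2 ≤ n - 2)
    (hj1 : 4 ≤ j1) (hj1' : j1 ≤ n) (hj2 : 4 ≤ j2) (hj2' : j2 ≤ n)
    (hc1 : cross (A i1 - A 2) (A j1 - A 1) = 0)
    (hc2 : cross (A i2 - A 2) (A j2 - A 1) = 0)
    (hlt : i1 < i2) : j1 < j2 := by
  by_contra hj
  push_neg at hj
  have hA : 0 < ε * cross (A i1 - A 2) (A i2 - A 2) := factA hn A ε hE hi1 hlt hi2'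
  have hwv1 : 0 < ε * cross (A 2 - A 1) (A j1 - A 1) := half1 hn A ε hE (by omega) hj1'
  rcases eq_or_lt_of_le hj with he | hlt2
  · rw [he] at hc2
    have h0 := transfer (A i1 - A 2) (A i2 - A 2) (A j1 - A 1) (A 2 - A 1) hc1 hc2
    exact absurd h0 (mul_ne_zero (ne_of_eps_pos hA) (ne_of_eps_pos hwv1))
  · have hB : 0 < ε * cross (A j2 - A 1) (A j1 - A 1) := factB hn A ε hE hj2 hlt2 hj1'
    have hwu1 : 0 < ε * cross (A 2 - A 1) (A i1 - A 2) := half2 hn A ε hE hi1 hi1'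
    have hwu2 : 0 < ε * cross (A 2 - A 1) (A i2 - A 2) := half2 hn A ε hE hi2 hi2'
    have hwv2 : 0 < ε * cross (A 2 - A 1) (A j2 - A 1) := half1 hn A ε hE (by omega) hj2'
    -- step 1
    have gp1 := crossGP (A i1 - A 2) (A j1 - A 1) (A 2 - A 1) (A i2 - A 2)
    have e1 : (ε * cross (A 2 - A 1) (A i1 - A 2)) * (ε * cross (A j1 - A 1) (A i2 - A 2))
        = (ε * cross (A i1 - A 2) (A i2 - A 2)) * (ε * cross (A 2 - A 1) (A j1 - A 1)) := by
      linear_combination (ε ^ 2) * gp1 - ε ^ 2 * cross (A 2 - A 1) (A i2 - A 2) * hc1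
    have s1 : 0 < ε * cross (A j1 - A 1) (A i2 - A 2) := by
      nlinarith [mul_pos hA hwv1, hwu1, e1]
    -- step 2
    have gp2 := crossGP (A j1 - A 1) (A j2 - A 1) (A 2 - A 1) (A i2 - A 2)
    have a1 : cross (A j1 - A 1) (A j2 - A 1) = -cross (A j2 - A 1) (A j1 - A 1) :=
      cross_anti _ _
    have a2 : cross (A j2 - A 1) (A i2 - A 2) = -cross (A i2 - A 2) (A j2 - A 1) :=
      cross_anti _ _
    have e2 : (ε * cross (A j1 - A 1) (A i2 - A 2)) * (ε * cross (A 2 - A 1) (A j2 - A 1))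
        + (ε * cross (A j2 - A 1) (A j1 - A 1)) * (ε * cross (A 2 - A 1) (A i2 - A 2))
        = 0 := by
      linear_combination (-(ε ^ 2)) * gp2 + (ε ^ 2 * cross (A 2 - A 1) (A i2 - A 2)) * a1
        + (ε ^ 2 * cross (A 2 - A 1) (A j1 - A 1)) * a2
        - (ε ^ 2 * cross (A 2 - A 1) (A j1 - A 1)) * hc2
    linarith [mul_pos s1 hwv2, mul_pos hB hwu2, e2]

end S12

theorem statement_12 (n : ℕ) (hn : 6 ≤ n) (A : ZMod n → Pt)
    (hconv : ConvexCyclic A)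
    (i1 i2 j1 j2 : ℕ)
    (hi1 : 3 ≤ i1) (hi1' : i1 ≤ n - 2) (hi2 : 3 ≤ i2) (hi2' : i2 ≤ n - 2)
    (hj1 : 4 ≤ j1) (hj1' : j1 ≤ n) (hj2 : 4 ≤ j2) (hj2' : j2 ≤ n)
    (h1 : Para (A 2) (A i1) (A 1) (A j1))
    (h2 : Para (A 2) (A i2) (A 1) (A j2)) :
    i1 < i2 ↔ j1 < j2 := by
  obtain ⟨hinj, hext, hor⟩ := hconv
  obtain ⟨ε, hE⟩ : ∃ ε : ℝ, ∀ i j : ZMod n, j ≠ i → j ≠ i + 1 →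
      0 < ε * cross (A (i + 1) - A i) (A j - A i) := by
    rcases hor with h | h
    · exact ⟨1, fun i j ha hb => by simpa using h i j ha hb⟩
    · exact ⟨-1, fun i j ha hb => by have := h i j ha hb; linarith⟩
  have hc1 : cross (A i1 - A 2) (A j1 - A 1) = 0 := by
    by_contra h; exact h1 (S12.indep_of_cross h)
  have hc2 : cross (A i2 - A 2) (A j2 - A 1) = 0 := by
    by_contra h; exact h2 (S12.indep_of_cross h)
  constructor
  · intro h
    exact S12.key hn A ε hE i1 i2 j1 j2 hi1 hi1' hi2 hi2' hj1 hj1' hj2 hj2' hc1 hc2 h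
  · intro h
    by_contra hcon
    push_neg at hcon
    rcases eq_or_lt_of_le hcon with he | hlt
    · subst he
      have hB' : 0 < ε * cross (A j1 - A 1) (A j2 - A 1) := S12.factB hn A ε hE hj1 h hj2'
      have hwu1 : 0 < ε * cross (A 2 - A 1) (A i2 - A 2) := S12.half2 hn A ε hE hi2 hi2'
      have hc1' : cross (A j1 - A 1) (A i2 - A 2) = 0 := by
        rw [S12.cross_anti, hc1, neg_zero]
      have hc2' : cross (A j2 - A 1) (A i2 - A 2) = 0 := by
        rw [S12.cross_anti, hc2, neg_zero]
      have h0 := S12.transfer (A j1 - A 1) (A j2 - A 1) (A i2 - A 2) (A 2 - A 1) hc1' hc2'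
      exact absurd h0 (mul_ne_zero (S12.ne_of_eps_pos hB') (S12.ne_of_eps_pos hwu1))
    · have := S12.key hn A ε hE i2 i1 j2 j1 hi2 hi2' hi1 hi1' hj2 hj2' hj1 hj1' hc2 hc1 hlt
      omega
end
end
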